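/- arXiv:2312.00002 — 5 statements merged into one kernel-verified Lean document; each statement's English description precedes it below -/
import Mathlib

section
/- Let G be a topological group with identity e_G and H a topological group. If π : G → H is a (not necessarily continuous) group homomorphism such that there is a neighborhood U of e_G with closure(π(U)) compact in H, then the set DG(π) = ⋂_{U ∈ 𝒰} closure(π(U)), where 𝒰 is the neighborhood filter of e_G, is a subgroup of H. -/
open Set Topology
open scoped Pointwise

theorem closure_mul_closure_subset {M : Type*} [TopologicalSpace M] [Mul M]
    [SeparatelyContinuousMul M] (s t : Set M) : closure s * closure t ⊆ closure (s * t) :=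
  image2_subset_iff.2 fun _ hx _ hy =>
    map_mem_closure₂' continuous_const_mul continuous_mul_const hx hy fun _ ha _ hb =>
      mul_mem_mul ha hb

namespace MonoidHom

variable {G H : Type*}

section Monoid

variable [Monoid G] [TopologicalSpace G] [ContinuousMul G]
  [Monoid H] [TopologicalSpace H] [SeparatelyContinuousMul H]

def discontinuitySubmonoid (π : G →* H) : Submonoid H where
  carrier := ⋂ U ∈ 𝓝 (1 : G), closure (π '' U)
  one_mem' := mem_iInter₂.2 fun U hU => subset_closure ⟨1, mem_of_mem_nhds hU, map_one π⟩
  mul_mem' {a b} ha hb := by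
    simp only [mem_iInter₂] at ha hb ⊢
    intro U hU
    obtain ⟨V, hV_open, hV_one, hVV⟩ := exists_open_nhds_one_mul_subset hU
    have hV : V ∈ 𝓝 (1 : G) := hV_open.mem_nhds hV_one
    have hab : a * b ∈ closure (π '' (V * V)) := by
      rw [image_mul]
      exact closure_mul_closure_subset _ _ (mul_mem_mul (ha V hV) (hb V hV))
    exact closure_mono (image_mono hVV) hab

theorem mem_discontinuitySubmonoid {π : G →* H} {h : H} :
    h ∈ π.discontinuitySubmonoid ↔ ∀ U ∈ 𝓝 (1 : G), h ∈ closure (π '' U) :=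
  mem_iInter₂

end Monoid

variable [Group G] [TopologicalSpace G] [IsTopologicalGroup G]
  [Group H] [TopologicalSpace H] [SeparatelyContinuousMul H] [ContinuousInv H]

def discontinuityGroup (π : G →* H) : Subgroup H where
  toSubmonoid := π.discontinuitySubmonoid
  inv_mem' {a} ha := by
    simp only [Submonoid.mem_carrier, mem_discontinuitySubmonoid] at ha ⊢
    intro U hU
    have ha_inv : a ∈ closure (π '' U⁻¹) := ha U⁻¹ (inv_mem_nhds_one G hU)
    rwa [image_inv, ← inv_closure, Set.mem_inv] at ha_inv

theorem coe_discontinuityGroup (π : G →* H) :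
    (π.discontinuityGroup : Set H) = ⋂ U ∈ 𝓝 (1 : G), closure (π '' U) :=
  rfl

end MonoidHom

theorem stmt0_general {G H : Type*} [Group G] [TopologicalSpace G] [IsTopologicalGroup G]
    [Group H] [TopologicalSpace H] [IsTopologicalGroup H]
    (π : G →* H) :
    ∃ S : Subgroup H, (S : Set H) = ⋂ U ∈ nhds (1 : G), closure (π '' U) :=
  ⟨π.discontinuityGroup, π.coe_discontinuityGroup⟩

/-- The discontinuity group of a relatively compact (not necessarily continuous)
homomorphism `π : G → H` is a subgroup of `H`. -/
theorem stmt0 {G H : Type*} [Group G] [TopologicalSpace G] [IsTopologicalGroup G]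
    [Group H] [TopologicalSpace H] [IsTopologicalGroup H]
    (π : G →* H)
    (hrc : ∃ U ∈ nhds (1 : G), IsCompact (closure (π '' U))) :
    ∃ S : Subgroup H, (S : Set H) = ⋂ U ∈ nhds (1 : G), closure (π '' U) :=
  stmt0_general π
end

section
/- Let G and H be topological groups and π : G → H a relatively compact homomorphism. Then π is continuous if and only if DG(π) = {e_H}. -/
/-!
`DG(π)` is the set of cluster points of `π` along `𝓝 1`. A homomorphism is continuous iff it is
continuous at `1`, i.e. iff `π x → 1` as `x → 1`. In a Hausdorff space a convergent map has its
limit as its only cluster point; conversely, a map that eventually lies in a compact set and has a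
single cluster point converges to it.
-/

open Filter Topology Set

section ClusterPoints

variable {X Y : Type*} [TopologicalSpace Y] {f : X → Y} {F : Filter X} {y z : Y}

theorem biInter_closure_image_eq_setOf_mapClusterPt (f : X → Y) (F : Filter X) :
    ⋂ U ∈ F, closure (f '' U) = {y | MapClusterPt y F f} := by
  ext y
  simp [mapClusterPt_def, (F.basis_sets.map f).clusterPt_iff_forall_mem_closure]

theorem MapClusterPt.eq_of_tendsto [T2Space Y] (hz : MapClusterPt z F f)
    (hf : Tendsto f F (𝓝 y)) : z = y :=
  eq_of_nhds_neBot (ClusterPt.mono hz hf).neBot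

theorem tendsto_nhds_iff_setOf_mapClusterPt_eq_singleton [T2Space Y] [F.NeBot] {K : Set Y}
    (hK : IsCompact K) (hfK : ∀ᶠ x in F, f x ∈ K) :
    Tendsto f F (𝓝 y) ↔ {z | MapClusterPt z F f} = {y} := by
  refine ⟨fun hf => ?_, fun hy => hK.tendsto_nhds_of_unique_mapClusterPt hfK fun z _ hz => ?_⟩
  · ext z
    exact ⟨fun hz => hz.eq_of_tendsto hf, fun hz => hz ▸ hf.mapClusterPt⟩
  · exact hy.subset hz

end ClusterPoints

theorem stmt3_general {G H : Type*} [Group G] [TopologicalSpace G] [IsTopologicalGroup G]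
    [Group H] [TopologicalSpace H] [IsTopologicalGroup H] [T2Space H]
    (π : G →* H)
    (hrc : ∃ U ∈ nhds (1 : G), IsCompact (closure (π '' U))) :
    Continuous π ↔ (⋂ U ∈ nhds (1 : G), closure (π '' U)) = {(1 : H)} := by
  obtain ⟨U₀, hU₀, hK⟩ := hrc
  have hπK : ∀ᶠ x in 𝓝 1, π x ∈ closure (π '' U₀) :=
    mem_of_superset hU₀ fun x hx => subset_closure (mem_image_of_mem π hx)
  rw [biInter_closure_image_eq_setOf_mapClusterPt,
    ← tendsto_nhds_iff_setOf_mapClusterPt_eq_singleton hK hπK]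
  exact ⟨fun h => h.tendsto' 1 1 (map_one π), continuous_of_tendsto_nhds_one π⟩

/-- A relatively compact homomorphism `π` is continuous if and only if its
discontinuity group is trivial. -/
theorem stmt3 {G H : Type*} [Group G] [TopologicalSpace G] [IsTopologicalGroup G]
    [Group H] [TopologicalSpace H] [IsTopologicalGroup H] [T2Space H]
    [LocallyCompactSpace H]
    (π : G →* H)
    (hrc : ∃ U ∈ nhds (1 : G), IsCompact (closure (π '' U))) :
    Continuous π ↔ (⋂ U ∈ nhds (1 : G), closure (π '' U)) = {(1 : H)} :=
  stmt3_general π hrc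
end

section
/- Let G and H be topological groups, G' the commutator subgroup of G, and π : G → H a relatively compact homomorphism. Then the commutator subgroup DG(π)' of the discontinuity group is a normal subgroup of DG(π|_{G'}). -/
/-!
`DG(π) = ⋂_U closure (π U)` is the set of cluster points of `π` at `1`, and cluster points are
carried along by continuous operations: if `x, y ∈ DG(π)`, then `⁅x, y⁆` is a cluster point of
`π` along the commutators `⁅a, b⁆`, `a, b → 1`, which tend to `1` inside `G'`. Hence
`DG(π)' ≤ DG(π|_{G'}) ≤ DG(π)`, and a subgroup normalizes its own commutator subgroup.
-/

open Filter Topology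
open scoped commutatorElement

section ClusterPoints

variable {α β γ X Y Z : Type*} [TopologicalSpace X] [TopologicalSpace Y] [TopologicalSpace Z]

theorem mem_iInter_closure_image_iff_mapClusterPt {f : α → X} {l : Filter α} {x : X} :
    x ∈ ⋂ U ∈ l, closure (f '' U) ↔ MapClusterPt x l f := by
  rw [MapClusterPt, (l.basis_sets.map f).clusterPt_iff_forall_mem_closure, Set.mem_iInter₂]
  rfl

theorem MapClusterPt.map₂ {la : Filter α} {lb : Filter β} {lc : Filter γ}
    {fa : α → X} {fb : β → Y} {fc : γ → Z} {x : X} {y : Y} {op : X → Y → Z} {g : α → β → γ}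
    (hx : MapClusterPt x la fa) (hy : MapClusterPt y lb fb)
    (hop : ContinuousAt (Function.uncurry op) (x, y))
    (hg : Tendsto (Function.uncurry g) (la ×ˢ lb) lc)
    (hfc : ∀ a b, fc (g a b) = op (fa a) (fb b)) :
    MapClusterPt (op x y) lc fc := by
  have h := (hx.prodMap hy).continuousAt_comp hop
  rw [show Function.uncurry op ∘ Prod.map fa fb = fc ∘ Function.uncurry g from
    funext fun p => (hfc p.1 p.2).symm] at h
  exact h.of_comp hg

end ClusterPoints

theorem continuous_commutatorElement {M : Type*} [Group M] [TopologicalSpace M]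
    [IsTopologicalGroup M] : Continuous fun p : M × M => ⁅p.1, p.2⁆ := by
  simp only [commutatorElement_def]
  fun_prop

section DiscontinuityGroup

variable {G H : Type*} [Group G] [TopologicalSpace G] [IsTopologicalGroup G]
  [Group H] [TopologicalSpace H] [IsTopologicalGroup H]

def discontinuityGroup (π : G →* H) : Subgroup H where
  carrier := {y | MapClusterPt y (𝓝 1) π}
  one_mem' := by
    have h : MapClusterPt (π 1) (pure 1) π := (tendsto_pure_nhds π 1).mapClusterPt
    simpa using h.mono (pure_le_nhds 1)
  mul_mem' {x y} hx hy := by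
    have hmul := tendsto_mul (a := (1 : G)) (b := 1)
    rw [nhds_prod_eq, mul_one] at hmul
    exact hx.map₂ hy continuous_mul.continuousAt hmul (map_mul π)
  inv_mem' {x} hx := by
    have hinv : Tendsto (·⁻¹) (𝓝 (1 : G)) (𝓝 1) := by
      simpa using (continuous_inv.tendsto (1 : G))
    refine MapClusterPt.of_comp hinv ?_
    convert hx.continuousAt_comp continuous_inv.continuousAt using 1
    exact funext (map_inv π)

theorem coe_discontinuityGroup (π : G →* H) :
    (discontinuityGroup π : Set H) = ⋂ U ∈ 𝓝 (1 : G), closure (π '' U) := by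
  ext y
  exact mem_iInter_closure_image_iff_mapClusterPt.symm

theorem discontinuityGroup_comp_subtype_le (π : G →* H) (K : Subgroup G) :
    discontinuityGroup (π.comp K.subtype) ≤ discontinuityGroup π :=
  fun _ hy => MapClusterPt.of_comp (continuous_subtype_val.tendsto 1) hy

theorem commutatorElement_mem_discontinuityGroup_comp_commutator (π : G →* H) {x y : H}
    (hx : x ∈ discontinuityGroup π) (hy : y ∈ discontinuityGroup π) :
    ⁅x, y⁆ ∈ discontinuityGroup (π.comp (commutator G).subtype) := by
  let c : G → G → commutator G := fun a b =>
    ⟨⁅a, b⁆, Subgroup.commutator_mem_commutator (Subgroup.mem_top a) (Subgroup.mem_top b)⟩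
  have hc : Tendsto (Function.uncurry c) (𝓝 1 ×ˢ 𝓝 1) (𝓝 1) := by
    rw [tendsto_subtype_rng, ← nhds_prod_eq]
    have h := continuous_commutatorElement.tendsto ((1 : G), (1 : G))
    rwa [commutatorElement_one_right] at h
  exact hx.map₂ hy continuous_commutatorElement.continuousAt hc (map_commutatorElement π)

end DiscontinuityGroup

theorem stmt6_general {G H : Type*} [Group G] [TopologicalSpace G] [IsTopologicalGroup G]
    [Group H] [TopologicalSpace H] [IsTopologicalGroup H]
    (π : G →* H)
    (DGcomm : Subgroup H)
    (hDGcomm : DGcomm = Subgroup.closure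
      {z : H | ∃ x ∈ ⋂ U ∈ nhds (1 : G), closure (π '' U),
        ∃ y ∈ ⋂ U ∈ nhds (1 : G), closure (π '' U), z = x * y * x⁻¹ * y⁻¹}) :
    ((DGcomm : Set H) ⊆
      ⋂ V ∈ nhds (1 : (commutator G)),
        closure ((fun v : commutator G => π v) '' V)) ∧
    ∀ h ∈ ⋂ V ∈ nhds (1 : (commutator G)),
        closure ((fun v : commutator G => π v) '' V),
      ∀ x ∈ DGcomm, h * x * h⁻¹ ∈ DGcomm := by
  have hDGcomm_eq : DGcomm = ⁅discontinuityGroup π, discontinuityGroup π⁆ := by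
    rw [hDGcomm, Subgroup.commutator_def, ← coe_discontinuityGroup]
    simp only [SetLike.mem_coe, commutatorElement_def, eq_comm]
  have hDG_restrict : ⋂ V ∈ 𝓝 (1 : commutator G), closure ((fun v : commutator G => π v) '' V) =
      discontinuityGroup (π.comp (commutator G).subtype) :=
    (coe_discontinuityGroup (π.comp (commutator G).subtype)).symm
  rw [hDG_restrict, hDGcomm_eq]
  refine ⟨Subgroup.commutator_le.2 fun x hx y hy =>
    commutatorElement_mem_discontinuityGroup_comp_commutator π hx hy, fun h hh x hx => ?_⟩
  have hN := Subgroup.normalizer_commutator_ge_left _ (discontinuityGroup π)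
    (discontinuityGroup_comp_subtype_le π _ hh)
  exact (Subgroup.mem_normalizer_iff.1 hN x).1 hx

/-- The commutator subgroup `DG(π)'` of the discontinuity group of a relatively
compact homomorphism `π` is a normal subgroup of the discontinuity group
`DG(π|_{G'})` of the restriction of `π` to the commutator subgroup of `G`. -/
theorem stmt6 {G H : Type*} [Group G] [TopologicalSpace G] [IsTopologicalGroup G]
    [Group H] [TopologicalSpace H] [IsTopologicalGroup H] [T2Space H]
    (π : G →* H)
    (hrc : ∃ U ∈ nhds (1 : G), IsCompact (closure (π '' U)))
    (DGcomm : Subgroup H)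
    (hDGcomm : DGcomm = Subgroup.closure
      {z : H | ∃ x ∈ ⋂ U ∈ nhds (1 : G), closure (π '' U),
        ∃ y ∈ ⋂ U ∈ nhds (1 : G), closure (π '' U), z = x * y * x⁻¹ * y⁻¹}) :
    ((DGcomm : Set H) ⊆
      ⋂ V ∈ nhds (1 : (commutator G)),
        closure ((fun v : commutator G => π v) '' V)) ∧
    ∀ h ∈ ⋂ V ∈ nhds (1 : (commutator G)),
        closure ((fun v : commutator G => π v) '' V),
      ∀ x ∈ DGcomm, h * x * h⁻¹ ∈ DGcomm :=
  stmt6_general π DGcomm hDGcomm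
end

section
/- Let G, H, K be topological groups, π : G → H a relatively compact homomorphism, and φ : H → K a continuous group homomorphism whose restriction to compact sets is proper (e.g., φ continuous with H locally compact and K Hausdorff). If φ is a closed map on the compact closure of π(U₀) for some identity neighborhood U₀, then DG(φ ∘ π) ⊇ φ(DG(π)); moreover if φ has compact kernel then DG(φ ∘ π) = φ(DG(π)) provided closure(π(U)) is compact for all sufficiently small U. -/
/-!
The set `⋂ U ∈ 𝓝 1, closure (σ '' U)` is the set of cluster points of `σ` at the identity.
A continuous map sends cluster points of `π` to cluster points of `φ ∘ π`. Conversely, if `π` is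
eventually in a compact set, a cluster point `k` of `φ ∘ π` lifts: the filter of `π`-images
meeting the fibre `φ ⁻¹' {k}` is nontrivial and lives on a compact set, so it has a cluster
point `h`, and `φ h = k` because `K` is Hausdorff.
-/

open Filter Topology

section

variable {α X Y : Type*} [TopologicalSpace X] [TopologicalSpace Y]

theorem setOf_mapClusterPt_eq_biInter_closure_image (l : Filter α) (u : α → X) :
    {x | MapClusterPt x l u} = ⋂ U ∈ l, closure (u '' U) := by
  ext x
  simp only [Set.mem_ofPred_eq, Set.mem_iInter, MapClusterPt,
    (l.basis_sets.map u).clusterPt_iff_forall_mem_closure, id]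

theorem MapClusterPt.exists_mapClusterPt_eq_of_comp [T2Space Y] {l : Filter α} {u : α → X}
    {f : X → Y} {s : Set X} {y : Y} (hf : Continuous f) (hs : IsCompact s)
    (hus : ∀ᶠ a in l, u a ∈ s) (hy : MapClusterPt y l (f ∘ u)) :
    ∃ x, MapClusterPt x l u ∧ f x = y := by
  set L := map u l ⊓ comap f (𝓝 y)
  have hL : L.NeBot := by
    rw [← map_neBot_iff f, Filter.push_pull, map_map, inf_comm]
    exact hy
  obtain ⟨x, -, hx⟩ := hs.exists_clusterPt (f := L) (inf_le_left.trans (le_principal_iff.2 hus))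
  refine ⟨x, hx.of_inf_left, ?_⟩
  have hfx : ClusterPt (f x) (𝓝 y) :=
    (hf.continuousAt.mapClusterPt hx).clusterPt.mono
      ((map_mono inf_le_right).trans map_comap_le)
  exact eq_of_nhds_neBot hfx

end

theorem stmt8_general {G H K : Type*} [Group G] [TopologicalSpace G]
    [Group H] [TopologicalSpace H]
    [Group K] [TopologicalSpace K] [T2Space K]
    (π : G →* H) (φ : H →* K) (hφ : Continuous φ)
    (U₀ : Set G) (hU₀ : U₀ ∈ nhds (1 : G)) (hc : IsCompact (closure (π '' U₀))) :
    (φ '' ⋂ U ∈ nhds (1 : G), closure (π '' U)) ⊆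
      (⋂ U ∈ nhds (1 : G), closure ((φ ∘ π) '' U)) ∧
    (IsCompact ((φ.ker : Set H)) →
      (∀ U ∈ nhds (1 : G), IsCompact (closure (π '' U))) →
      (⋂ U ∈ nhds (1 : G), closure ((φ ∘ π) '' U)) =
        φ '' ⋂ U ∈ nhds (1 : G), closure (π '' U)) := by
  simp only [← setOf_mapClusterPt_eq_biInter_closure_image]
  have hmap : φ '' {h | MapClusterPt h (𝓝 1) π} ⊆ {k | MapClusterPt k (𝓝 1) (φ ∘ π)} := by
    rintro _ ⟨h, hh, rfl⟩
    exact hh.continuousAt_comp hφ.continuousAt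
  refine ⟨hmap, fun _ _ => Set.Subset.antisymm ?_ hmap⟩
  intro k hk
  have hπ : ∀ᶠ g in 𝓝 (1 : G), π g ∈ closure (π '' U₀) :=
    mem_of_superset hU₀ fun g hg => subset_closure (Set.mem_image_of_mem π hg)
  obtain ⟨h, hh, rfl⟩ := MapClusterPt.exists_mapClusterPt_eq_of_comp hφ hc hπ hk
  exact ⟨h, hh, rfl⟩

/-- For a relatively compact homomorphism `π : G → H` and a continuous
homomorphism `φ : H → K` that is a closed map on the compact closure of the
image of some identity neighborhood, one has `φ(DG(π)) ⊆ DG(φ ∘ π)`; moreover,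
if `φ` has compact kernel and `closure (π '' U)` is compact for all identity
neighborhoods `U`, then `DG(φ ∘ π) = φ(DG(π))`. -/
theorem stmt8 {G H K : Type*} [Group G] [TopologicalSpace G] [IsTopologicalGroup G]
    [Group H] [TopologicalSpace H] [IsTopologicalGroup H] [T2Space H]
    [Group K] [TopologicalSpace K] [IsTopologicalGroup K] [T2Space K]
    (π : G →* H) (φ : H →* K) (hφ : Continuous φ)
    (U₀ : Set G) (hU₀ : U₀ ∈ nhds (1 : G)) (hc : IsCompact (closure (π '' U₀)))
    (hclosed : ∀ C ⊆ closure (π '' U₀), IsClosed C → IsClosed (φ '' C)) :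
    (φ '' ⋂ U ∈ nhds (1 : G), closure (π '' U)) ⊆
      (⋂ U ∈ nhds (1 : G), closure ((φ ∘ π) '' U)) ∧
    (IsCompact ((φ.ker : Set H)) →
      (∀ U ∈ nhds (1 : G), IsCompact (closure (π '' U))) →
      (⋂ U ∈ nhds (1 : G), closure ((φ ∘ π) '' U)) =
        φ '' ⋂ U ∈ nhds (1 : G), closure (π '' U)) :=
  stmt8_general π φ hφ U₀ hU₀ hc
end

section
/- Let G be a connected topological group and π : G → H a relatively compact homomorphism into a Hausdorff topological group H. If V is any open set in H containing DG(π), then there exists a neighborhood U of e_G such that closure(π(U)) ⊆ V; i.e., the filter basis {closure(π(U)) : U ∈ 𝒰} converges to DG(π). -/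
open Filter Set

/-- The closed sets `closure (f '' U)`, `U ∈ l`, form a downward directed family; once one of them
is compact, the traces below it are all compact and `exists_subset_nhds_of_isCompact'` applies. -/
theorem Filter.exists_closure_image_subset_of_isCompact {α X : Type*} [TopologicalSpace X]
    {l : Filter α} {f : α → X} {V : Set X}
    (hc : ∃ U ∈ l, IsCompact (closure (f '' U))) (hV : IsOpen V)
    (hsub : ⋂ U ∈ l, closure (f '' U) ⊆ V) :
    ∃ U ∈ l, closure (f '' U) ⊆ V := by
  obtain ⟨U₀, hU₀, hU₀_compact⟩ := hc
  let ι := {U : Set α // U ∈ l ∧ U ⊆ U₀}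
  have : Nonempty ι := ⟨⟨U₀, hU₀, subset_rfl⟩⟩
  let K : ι → Set X := fun U => closure (f '' U.1)
  have hK_closed : ∀ U, IsClosed (K U) := fun _ => isClosed_closure
  have hK_compact : ∀ U : ι, IsCompact (K U) := fun U =>
    hU₀_compact.of_isClosed_subset (hK_closed U) (closure_mono (image_mono U.2.2))
  have hK_directed : Directed (· ⊇ ·) K := fun U₁ U₂ =>
    ⟨⟨U₁.1 ∩ U₂.1, inter_mem U₁.2.1 U₂.2.1, inter_subset_left.trans U₁.2.2⟩,
      closure_mono (image_mono inter_subset_left), closure_mono (image_mono inter_subset_right)⟩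
  have hK_inter : ⋂ U, K U ⊆ V := by
    refine Subset.trans ?_ hsub
    refine subset_iInter₂ fun U hU => ?_
    exact (iInter_subset K ⟨U ∩ U₀, inter_mem hU hU₀, inter_subset_right⟩).trans
      (closure_mono (image_mono inter_subset_left))
  obtain ⟨U, hU⟩ := exists_subset_nhds_of_isCompact' hK_directed hK_compact hK_closed
    fun x hx => hV.mem_nhds (hK_inter hx)
  exact ⟨U.1, U.2.1, hU⟩

theorem stmt13_general {G H : Type*} [Group G] [TopologicalSpace G]
    [Group H] [TopologicalSpace H]
    (π : G →* H)
    (hrc : ∃ U ∈ nhds (1 : G), IsCompact (closure (π '' U))) :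
    ∀ V : Set H, IsOpen V → (⋂ U ∈ nhds (1 : G), closure (π '' U)) ⊆ V →
      ∃ U ∈ nhds (1 : G), closure (π '' U) ⊆ V :=
  fun _ hV hsub => exists_closure_image_subset_of_isCompact hrc hV hsub

/-- For a relatively compact homomorphism `π` of a connected topological group
`G` into a Hausdorff topological group `H`, every open set containing `DG(π)`
contains `closure (π '' U)` for some identity neighborhood `U`; i.e. the filter
basis `{closure (π '' U)}` converges to `DG(π)`. -/
theorem stmt13 {G H : Type*} [Group G] [TopologicalSpace G] [IsTopologicalGroup G]
    [ConnectedSpace G]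
    [Group H] [TopologicalSpace H] [IsTopologicalGroup H] [T2Space H]
    (π : G →* H)
    (hrc : ∃ U ∈ nhds (1 : G), IsCompact (closure (π '' U))) :
    ∀ V : Set H, IsOpen V → (⋂ U ∈ nhds (1 : G), closure (π '' U)) ⊆ V →
      ∃ U ∈ nhds (1 : G), closure (π '' U) ⊆ V :=
  stmt13_general π hrc
end
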